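/- Let φ : [0,1] → ℝ be a convex function with a subgradient ∇φ satisfying ∇φ(v) ∈ [−1, 1] for every v ∈ [0,1]. Then for any probability distribution Π on [0,1] × [0,1] of pairs (v1, v2), E_{(v1,v2)∼Π} D_φ(v1 ‖ v2) ≤ sup_{v* ∈ [0,1]} E_{(v1,v2)∼Π} D_{φ_{v*}}(v1 ‖ v2), where for each v* the V-shaped divergence D_{φ_{v*}} is the Bregman divergence of φ_{v*}(v) = |v − v*| with respect to the subgradient ∇φ_{v*}(v) = −1 for v < v* and ∇φ_{v*}(v) = 1 for v ≥ v*. -/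

import Mathlib

open scoped Classical
open MeasureTheory Set

noncomputable section

/-- `g` is a subgradient of `φ` on `[0,1]`:
`φ(w) ≥ φ(v) + g(v)·(w - v)` for all `v, w ∈ [0,1]`. -/
def IsSubgradientOn (φ g : ℝ → ℝ) : Prop :=
  ∀ v ∈ Set.Icc (0 : ℝ) 1, ∀ w ∈ Set.Icc (0 : ℝ) 1, φ v + g v * (w - v) ≤ φ w

/-- The Bregman divergence `D_φ(a ‖ b) = φ(a) - φ(b) - ∇φ(b)·(a - b)`. -/
def breg (φ g : ℝ → ℝ) (a b : ℝ) : ℝ := φ a - φ b - g b * (a - b)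

/-- The V-shaped function `φ_{v*}(v) = |v - v*|`. -/
def vshape (vs : ℝ) : ℝ → ℝ := fun v => |v - vs|

/-- The chosen subgradient of the V-shaped function: `-1` for `v < v*`, `1` for `v ≥ v*`. -/
def vshapeGrad (vs : ℝ) : ℝ → ℝ := fun v => if v < vs then -1 else 1

/-!
Rounding the subgradient `g` to the `n` levels `-1 + 2(k+1)/n` exhibits `n φ` as a sum of `n`
V-shaped functions, kinked where `g` crosses the levels, with subgradients within `2` of `n g`.
Bregman divergences are linear in the pair `(φ, g)` and move by at most `2 ε |a - b|` when the
subgradient moves by `ε`, so `n D_φ ≤ ∑ₖ D_{φ_{sₖ}} + 4` on the square, and taking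
expectations bounds `E D_φ` by the supremum plus `4 / n`. At a kink where `g` stays below the
level, the V-shape must take the gradient `-1` instead of `+1`; its expected divergence is the
limit of those of kinks moving in from the right, hence still bounded by the supremum.
-/

open Filter Topology

theorem breg_const_mul (c : ℝ) (φ g : ℝ → ℝ) (a b : ℝ) :
    breg (fun v => c * φ v) (fun v => c * g v) a b = c * breg φ g a b := by
  unfold breg
  ring

theorem breg_sum {ι : Type*} (s : Finset ι) (φ g : ι → ℝ → ℝ) (a b : ℝ) :
    breg (fun v => ∑ i ∈ s, φ i v) (fun v => ∑ i ∈ s, g i v) a b =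
      ∑ i ∈ s, breg (φ i) (g i) a b := by
  simp only [breg, Finset.sum_sub_distrib, Finset.sum_mul]

namespace IsSubgradientOn

variable {φ g ψ h : ℝ → ℝ}

theorem monotoneOn (hsub : IsSubgradientOn φ g) : MonotoneOn g (Icc 0 1) := by
  intro v hv w hw hvw
  rcases hvw.eq_or_lt with rfl | hlt
  · exact le_rfl
  have h₁ := hsub v hv w hw
  have h₂ := hsub w hw v hv
  nlinarith

theorem breg_nonneg (hsub : IsSubgradientOn φ g) {a b : ℝ} (ha : a ∈ Icc (0 : ℝ) 1)
    (hb : b ∈ Icc (0 : ℝ) 1) : 0 ≤ breg φ g a b := by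
  have := hsub b hb a ha
  unfold breg
  linarith

theorem const_mul (hsub : IsSubgradientOn φ g) {c : ℝ} (hc : 0 ≤ c) :
    IsSubgradientOn (fun v => c * φ v) (fun v => c * g v) := by
  intro v hv w hw
  have := mul_le_mul_of_nonneg_left (hsub v hv w hw) hc
  linarith

theorem sum {ι : Type*} (s : Finset ι) {φ g : ι → ℝ → ℝ}
    (hsub : ∀ i ∈ s, IsSubgradientOn (φ i) (g i)) :
    IsSubgradientOn (fun v => ∑ i ∈ s, φ i v) (fun v => ∑ i ∈ s, g i v) := by
  intro v hv w hw
  rw [Finset.sum_mul, ← Finset.sum_add_distrib]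
  exact Finset.sum_le_sum fun i hi => hsub i hi v hv w hw

/-- Chain the subgradient inequalities along a uniform partition of `[b, a]` into `m` pieces; the
error `(h a - h b) (a - b) / m` vanishes as `m → ∞`. -/
theorem sub_le_sub_add (hφ : IsSubgradientOn φ g) (hψ : IsSubgradientOn ψ h) {ε : ℝ}
    (hgh : ∀ v ∈ Icc (0 : ℝ) 1, g v ≤ h v + ε) {a b : ℝ} (hb : b ∈ Icc (0 : ℝ) 1)
    (ha : a ∈ Icc (0 : ℝ) 1) (hba : b ≤ a) :
    φ a - φ b ≤ ψ a - ψ b + ε * (a - b) := by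
  have partition : ∀ m : ℕ, 0 < m →
      φ a - φ b ≤ ψ a - ψ b + ε * (a - b) + (h a - h b) * ((a - b) / m) := by
    intro m hm
    set Δ := (a - b) / m with hΔ
    have hΔ0 : 0 ≤ Δ := div_nonneg (by linarith) m.cast_nonneg
    have hmΔ : m * Δ = a - b := by rw [hΔ]; field_simp
    set t : ℕ → ℝ := fun i => b + i * Δ
    have ht : ∀ i ≤ m, t i ∈ Icc (0 : ℝ) 1 := by
      intro i hi
      have : (i : ℝ) * Δ ≤ m * Δ := mul_le_mul_of_nonneg_right (by exact_mod_cast hi) hΔ0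
      exact ⟨by nlinarith [hb.1, i.cast_nonneg (α := ℝ)], by linarith [ha.2]⟩
    set q : ℕ → ℝ := fun i => φ (t i) - ψ (t i) - Δ * h (t i) - ε * t i
    have step : ∀ i < m, q (i + 1) ≤ q i := by
      intro i hi
      have hsucc : t (i + 1) = t i + Δ := by simp only [t]; push_cast; ring
      have h₁ := hφ _ (ht (i + 1) hi) _ (ht i hi.le)
      have h₂ := hψ _ (ht i hi.le) _ (ht (i + 1) hi)
      have h₃ := mul_le_mul_of_nonneg_right (hgh _ (ht (i + 1) hi)) hΔ0
      simp only [q, hsucc] at h₁ h₂ h₃ ⊢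
      nlinarith
    have hq : ∀ i ≤ m, q i ≤ q 0 := by
      intro i hi
      induction i with
      | zero => exact le_rfl
      | succ i ih => exact (step i hi).trans (ih (by omega))
    have hqm := hq m le_rfl
    simp only [q, t, hmΔ, Nat.cast_zero, zero_mul, add_zero, add_sub_cancel] at hqm
    nlinarith
  have hlim : Tendsto (fun m : ℕ => ψ a - ψ b + ε * (a - b) + (h a - h b) * ((a - b) / m))
      atTop (𝓝 (ψ a - ψ b + ε * (a - b))) := by
    simpa using ((tendsto_const_div_atTop_nhds_zero_nat (a - b)).const_mul (h a - h b)).const_add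
      (ψ a - ψ b + ε * (a - b))
  exact ge_of_tendsto hlim ((eventually_gt_atTop 0).mono partition)

theorem breg_le_breg_add (hφ : IsSubgradientOn φ g) (hψ : IsSubgradientOn ψ h) {ε : ℝ}
    (hgh : ∀ v ∈ Icc (0 : ℝ) 1, |g v - h v| ≤ ε) {a b : ℝ} (ha : a ∈ Icc (0 : ℝ) 1)
    (hb : b ∈ Icc (0 : ℝ) 1) :
    breg φ g a b ≤ breg ψ h a b + 2 * ε * |a - b| := by
  have hgh' : ∀ v ∈ Icc (0 : ℝ) 1, g v ≤ h v + ε ∧ h v ≤ g v + ε := fun v hv => by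
    constructor <;> linarith [abs_le.mp (hgh v hv)]
  have hgb := abs_le.mp (hgh b hb)
  unfold breg
  rcases le_total b a with hba | hab
  · have := hφ.sub_le_sub_add hψ (fun v hv => (hgh' v hv).1) hb ha hba
    rw [abs_of_nonneg (sub_nonneg.mpr hba)]
    nlinarith
  · have := hψ.sub_le_sub_add hφ (fun v hv => (hgh' v hv).2) ha hb hab
    rw [abs_of_nonpos (sub_nonpos.mpr hab)]
    nlinarith

end IsSubgradientOn

def vshapeLeftGrad (vs : ℝ) : ℝ → ℝ := fun v => if v ≤ vs then -1 else 1

section VShape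

variable {vs : ℝ} {τ : ℝ → ℝ}

theorem isSubgradientOn_vshape (hτ : τ = vshapeGrad vs ∨ τ = vshapeLeftGrad vs) :
    IsSubgradientOn (vshape vs) τ := by
  intro v _ w _
  rcases hτ with rfl | rfl <;> simp only [vshapeGrad, vshapeLeftGrad, vshape] <;> split_ifs <;>
    cases abs_cases (v - vs) <;> cases abs_cases (w - vs) <;> linarith

theorem abs_breg_vshape_le (hτ : τ = vshapeGrad vs ∨ τ = vshapeLeftGrad vs) {a b : ℝ}
    (ha : a ∈ Icc (0 : ℝ) 1) (hb : b ∈ Icc (0 : ℝ) 1) :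
    |breg (vshape vs) τ a b| ≤ 2 := by
  have hτb : |τ b| ≤ 1 := by
    rcases hτ with rfl | rfl <;> simp only [vshapeGrad, vshapeLeftGrad] <;> split_ifs <;> simp
  have hab : |a - b| ≤ 1 := abs_sub_le_of_nonneg_of_le ha.1 ha.2 hb.1 hb.2
  calc |breg (vshape vs) τ a b| ≤ |a - b| + |τ b| * |a - b| := by
        unfold breg vshape
        refine (abs_sub _ _).trans (add_le_add ?_ (abs_mul _ _).le)
        simpa using abs_abs_sub_abs_le (a - vs) (b - vs)
    _ ≤ 2 := by nlinarith [abs_nonneg (a - b), abs_nonneg (τ b)]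

end VShape

theorem MonotoneOn.exists_threshold {g : ℝ → ℝ} (hg : MonotoneOn g (Icc 0 1)) (y : ℝ) :
    ∃ s ∈ Icc (0 : ℝ) 1, ∀ v ∈ Icc (0 : ℝ) 1,
      (v < s → g v < y) ∧ (s < v → y ≤ g v) := by
  set T := insert 0 {t ∈ Icc (0 : ℝ) 1 | g t < y}
  have hT : BddAbove T := ⟨1, by rintro t (rfl | ht); exacts [zero_le_one, ht.1.2]⟩
  have hT₀ : T.Nonempty := ⟨0, mem_insert _ _⟩
  refine ⟨sSup T, ⟨le_csSup hT (mem_insert _ _), csSup_le hT₀ ?_⟩,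
    fun v hv => ⟨fun hvs => ?_, ?_⟩⟩
  · rintro t (rfl | ht); exacts [zero_le_one, ht.1.2]
  · obtain ⟨t, ht, hvt⟩ := exists_lt_of_lt_csSup hT₀ hvs
    rcases ht with rfl | ht
    · exact absurd hv.1 (not_le.mpr hvt)
    · exact (hg hv ht.1 hvt.le).trans_lt ht.2
  · contrapose!
    exact fun hgv => le_csSup hT (Or.inr ⟨hv, hgv⟩)

theorem threshold_vshapeGrad_eq {g : ℝ → ℝ} {y s : ℝ}
    (hs : ∀ v ∈ Icc (0 : ℝ) 1, (v < s → g v < y) ∧ (s < v → y ≤ g v))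
    {v : ℝ} (hv : v ∈ Icc (0 : ℝ) 1) :
    (if g s < y then vshapeLeftGrad s else vshapeGrad s) v = if y ≤ g v then 1 else -1 := by
  rw [ite_apply]
  rcases lt_trichotomy v s with hvs | rfl | hsv
  · simp [vshapeGrad, vshapeLeftGrad, hvs, hvs.le, not_le.mpr ((hs v hv).1 hvs)]
  · by_cases h : g v < y
    · simp [h, vshapeLeftGrad, not_le.mpr h]
    · simp [h, vshapeGrad, not_lt.mp h]
  · simp [vshapeGrad, vshapeLeftGrad, not_le.mpr hsv, not_lt.mpr hsv.le, (hs v hv).2 hsv]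

theorem abs_mul_sub_sum_sign_le (n : ℕ) (hn : 0 < n) {x : ℝ} (hx : x ∈ Icc (-1 : ℝ) 1) :
    |n * x - ∑ k ∈ Finset.range n, (if -1 + 2 * (k + 1) / n ≤ x then 1 else -1 : ℝ)|
      ≤ 2 := by
  have hn' : (0 : ℝ) < n := by exact_mod_cast hn
  set r := n * (x + 1) / 2
  have hr₀ : 0 ≤ r := div_nonneg (mul_nonneg n.cast_nonneg (by linarith [hx.1])) zero_le_two
  have hrn : r ≤ n := by have := hx.2; simp only [r]; nlinarith
  have hlevel : ∀ k : ℕ, (-1 + 2 * (k + 1) / n ≤ x ↔ k < ⌊r⌋₊) := by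
    intro k
    rw [← le_sub_iff_add_le', sub_neg_eq_add, div_le_iff₀ hn', Nat.lt_iff_add_one_le,
      Nat.le_floor_iff hr₀, le_div_iff₀ two_pos]
    push_cast
    constructor <;> intro <;> linarith
  have hfloor : ⌊r⌋₊ ≤ n := Nat.floor_le_of_le hrn
  have hsum : ∑ k ∈ Finset.range n, (if -1 + 2 * (k + 1) / n ≤ x then 1 else -1 : ℝ)
      = 2 * ⌊r⌋₊ - n := by
    simp_rw [hlevel]
    rw [show (fun k : ℕ => (if k < ⌊r⌋₊ then 1 else -1 : ℝ))
        = fun k => 2 * (if k < ⌊r⌋₊ then 1 else 0) - 1 by ext; split_ifs <;> ring,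
      Finset.sum_sub_distrib, ← Finset.mul_sum, Finset.sum_boole,
      show (Finset.range n).filter (· < ⌊r⌋₊) = Finset.range ⌊r⌋₊ by ext; simp only [Finset.mem_filter, Finset.mem_range]; omega]
    simp
  rw [hsum, abs_le]
  have h₁ := Nat.floor_le hr₀
  have h₂ := Nat.lt_floor_add_one r
  simp only [r] at h₁ h₂
  constructor <;> linarith

theorem IsSubgradientOn.exists_vshape_approx {φ g : ℝ → ℝ} (hsub : IsSubgradientOn φ g)
    (hbdd : ∀ v ∈ Icc (0 : ℝ) 1, g v ∈ Icc (-1 : ℝ) 1) {n : ℕ} (hn : 0 < n) :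
    ∃ (s : ℕ → ℝ) (τ : ℕ → ℝ → ℝ),
      (∀ k, s k ∈ Icc (0 : ℝ) 1 ∧
        (τ k = vshapeGrad (s k) ∨ τ k = vshapeLeftGrad (s k))) ∧
      ∀ a ∈ Icc (0 : ℝ) 1, ∀ b ∈ Icc (0 : ℝ) 1,
        n * breg φ g a b ≤ ∑ k ∈ Finset.range n, breg (vshape (s k)) (τ k) a b + 4 := by
  set y : ℕ → ℝ := fun k => -1 + 2 * (k + 1) / n
  choose s hsI hs using fun k => hsub.monotoneOn.exists_threshold (y k)
  set τ : ℕ → ℝ → ℝ := fun k =>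
    if g (s k) < y k then vshapeLeftGrad (s k) else vshapeGrad (s k)
  have hτ : ∀ k, τ k = vshapeGrad (s k) ∨ τ k = vshapeLeftGrad (s k) := fun k => by
    simp only [τ]
    split_ifs <;> simp
  refine ⟨s, τ, fun k => ⟨hsI k, hτ k⟩, fun a ha b hb => ?_⟩
  have hψ := IsSubgradientOn.sum (Finset.range n) fun k _ => isSubgradientOn_vshape (hτ k)
  have hclose : ∀ v ∈ Icc (0 : ℝ) 1, |n * g v - ∑ k ∈ Finset.range n, τ k v| ≤ 2 := by
    intro v hv
    rw [Finset.sum_congr rfl fun k _ => threshold_vshapeGrad_eq (hs k) hv]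
    exact abs_mul_sub_sum_sign_le n hn (hbdd v hv)
  have key := (hsub.const_mul n.cast_nonneg).breg_le_breg_add hψ hclose ha hb
  rw [breg_const_mul, breg_sum] at key
  have hab : |a - b| ≤ 1 := abs_sub_le_of_nonneg_of_le ha.1 ha.2 hb.1 hb.2
  linarith

theorem tendsto_breg_vshapeGrad_nhdsGT (vs a b : ℝ) :
    Tendsto (fun s => breg (vshape s) (vshapeGrad s) a b) (𝓝[>] vs)
      (𝓝 (breg (vshape vs) (vshapeLeftGrad vs) a b)) := by
  have hgrad : ∀ᶠ s in 𝓝[>] vs, vshapeGrad s b = vshapeLeftGrad vs b := by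
    rcases le_or_gt b vs with hb | hb
    · filter_upwards [self_mem_nhdsWithin] with s hs
      simp [vshapeGrad, vshapeLeftGrad, hb, hb.trans_lt hs]
    · filter_upwards [Ioo_mem_nhdsGT hb] with s hs
      simp [vshapeGrad, vshapeLeftGrad, not_le.mpr hb, not_lt.mpr hs.2.le]
  have hcont : Tendsto (fun s => |a - s| - |b - s|) (𝓝[>] vs) (𝓝 (|a - vs| - |b - vs|)) :=
    ((continuous_const.sub continuous_id).abs.sub
      (continuous_const.sub continuous_id).abs).continuousAt.tendsto.mono_left nhdsWithin_le_nhds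
  refine (hcont.sub_const (vshapeLeftGrad vs b * (a - b))).congr' ?_
  filter_upwards [hgrad] with s hs
  simp only [breg, vshape, hs]

def vshapeSup (μ : Measure (ℝ × ℝ)) : ℝ :=
  sSup {e : ℝ | ∃ vs ∈ Set.Icc (0 : ℝ) 1,
    e = ∫ z, breg (vshape vs) (vshapeGrad vs) z.1 z.2 ∂μ}

section Expectation

variable {μ : Measure (ℝ × ℝ)}

theorem integrable_breg_vshape [IsFiniteMeasure μ]
    (hsupp : ∀ᵐ z ∂μ, z ∈ Icc (0 : ℝ) 1 ×ˢ Icc (0 : ℝ) 1)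
    {vs : ℝ} {τ : ℝ → ℝ} (hτ : τ = vshapeGrad vs ∨ τ = vshapeLeftGrad vs) :
    Integrable (fun z : ℝ × ℝ => breg (vshape vs) τ z.1 z.2) μ := by
  have hmeas : Measurable τ := by
    rcases hτ with rfl | rfl
    exacts [measurable_const.ite measurableSet_Iio measurable_const,
      measurable_const.ite measurableSet_Iic measurable_const]
  refine Integrable.of_bound (by unfold breg vshape; fun_prop) 2 ?_
  filter_upwards [hsupp] with z hz
  exact abs_breg_vshape_le hτ hz.1 hz.2

theorem integral_breg_vshape_nonneg
    (hsupp : ∀ᵐ z ∂μ, z ∈ Icc (0 : ℝ) 1 ×ˢ Icc (0 : ℝ) 1)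
    {vs : ℝ} {τ : ℝ → ℝ} (hτ : τ = vshapeGrad vs ∨ τ = vshapeLeftGrad vs) :
    0 ≤ ∫ z, breg (vshape vs) τ z.1 z.2 ∂μ :=
  integral_nonneg_of_ae <| hsupp.mono fun _ hz =>
    (isSubgradientOn_vshape hτ).breg_nonneg hz.1 hz.2

theorem bddAbove_integral_breg_vshape [IsFiniteMeasure μ]
    (hsupp : ∀ᵐ z ∂μ, z ∈ Icc (0 : ℝ) 1 ×ˢ Icc (0 : ℝ) 1) :
    BddAbove {e : ℝ | ∃ vs ∈ Set.Icc (0 : ℝ) 1,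
      e = ∫ z, breg (vshape vs) (vshapeGrad vs) z.1 z.2 ∂μ} := by
  refine ⟨2 * μ.real univ, ?_⟩
  rintro _ ⟨vs, -, rfl⟩
  exact (Real.le_norm_self _).trans <| norm_integral_le_of_norm_le_const <|
    hsupp.mono fun _ hz => abs_breg_vshape_le (Or.inl rfl) hz.1 hz.2

theorem integral_breg_vshapeGrad_le_vshapeSup [IsFiniteMeasure μ]
    (hsupp : ∀ᵐ z ∂μ, z ∈ Icc (0 : ℝ) 1 ×ˢ Icc (0 : ℝ) 1)
    {vs : ℝ} (hvs : vs ∈ Icc (0 : ℝ) 1) :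
    ∫ z, breg (vshape vs) (vshapeGrad vs) z.1 z.2 ∂μ ≤ vshapeSup μ :=
  le_csSup (bddAbove_integral_breg_vshape hsupp) ⟨vs, hvs, rfl⟩

theorem vshapeSup_nonneg [IsFiniteMeasure μ]
    (hsupp : ∀ᵐ z ∂μ, z ∈ Icc (0 : ℝ) 1 ×ˢ Icc (0 : ℝ) 1) :
    0 ≤ vshapeSup μ :=
  (integral_breg_vshape_nonneg hsupp (Or.inl rfl)).trans
    (integral_breg_vshapeGrad_le_vshapeSup hsupp ⟨le_rfl, zero_le_one⟩)

/-- Kinks moving in from the right; at `vs = 1` there is no room for that, but there the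
divergence vanishes on the square. -/
theorem integral_breg_vshapeLeftGrad_le_vshapeSup [IsFiniteMeasure μ]
    (hsupp : ∀ᵐ z ∂μ, z ∈ Icc (0 : ℝ) 1 ×ˢ Icc (0 : ℝ) 1)
    {vs : ℝ} (hvs : vs ∈ Icc (0 : ℝ) 1) :
    ∫ z, breg (vshape vs) (vshapeLeftGrad vs) z.1 z.2 ∂μ ≤ vshapeSup μ := by
  rcases hvs.2.lt_or_eq with hvs1 | rfl
  · have hlim : Tendsto (fun s => ∫ z, breg (vshape s) (vshapeGrad s) z.1 z.2 ∂μ) (𝓝[>] vs)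
        (𝓝 (∫ z, breg (vshape vs) (vshapeLeftGrad vs) z.1 z.2 ∂μ)) := by
      refine tendsto_integral_filter_of_dominated_convergence (fun _ => 2)
        (Eventually.of_forall fun s => (integrable_breg_vshape hsupp (Or.inl rfl)).1)
        (Eventually.of_forall fun s =>
          hsupp.mono fun _ hz => abs_breg_vshape_le (Or.inl rfl) hz.1 hz.2)
        (integrable_const _)
        (Eventually.of_forall fun z => tendsto_breg_vshapeGrad_nhdsGT vs z.1 z.2)
    refine le_of_tendsto hlim ?_
    filter_upwards [Ioo_mem_nhdsGT hvs1] with s hs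
    exact integral_breg_vshapeGrad_le_vshapeSup hsupp ⟨hvs.1.trans hs.1.le, hs.2.le⟩
  · have hzero : ∀ᵐ z ∂μ, breg (vshape 1) (vshapeLeftGrad 1) z.1 z.2 = 0 :=
      hsupp.mono fun z hz => by
        simp only [breg, vshape, vshapeLeftGrad, if_pos hz.2.2,
          abs_of_nonpos (sub_nonpos.mpr hz.1.2), abs_of_nonpos (sub_nonpos.mpr hz.2.2)]
        ring
    rw [integral_eq_zero_of_ae hzero]
    exact vshapeSup_nonneg hsupp

theorem integral_breg_vshape_le_vshapeSup [IsFiniteMeasure μ]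
    (hsupp : ∀ᵐ z ∂μ, z ∈ Icc (0 : ℝ) 1 ×ˢ Icc (0 : ℝ) 1)
    {vs : ℝ} (hvs : vs ∈ Icc (0 : ℝ) 1) {τ : ℝ → ℝ}
    (hτ : τ = vshapeGrad vs ∨ τ = vshapeLeftGrad vs) :
    ∫ z, breg (vshape vs) τ z.1 z.2 ∂μ ≤ vshapeSup μ := by
  rcases hτ with rfl | rfl
  exacts [integral_breg_vshapeGrad_le_vshapeSup hsupp hvs,
    integral_breg_vshapeLeftGrad_le_vshapeSup hsupp hvs]

theorem integral_breg_le_vshapeSup_add {φ g : ℝ → ℝ} (hsub : IsSubgradientOn φ g)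
    (hbdd : ∀ v ∈ Icc (0 : ℝ) 1, g v ∈ Icc (-1 : ℝ) 1) [IsProbabilityMeasure μ]
    (hsupp : ∀ᵐ z ∂μ, z ∈ Icc (0 : ℝ) 1 ×ˢ Icc (0 : ℝ) 1)
    (hint : Integrable (fun z : ℝ × ℝ => breg φ g z.1 z.2) μ) {n : ℕ} (hn : 0 < n) :
    ∫ z, breg φ g z.1 z.2 ∂μ ≤ vshapeSup μ + 4 / n := by
  obtain ⟨s, τ, hsτ, happrox⟩ := hsub.exists_vshape_approx hbdd hn
  have hτint : ∀ k ∈ Finset.range n,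
      Integrable (fun z : ℝ × ℝ => breg (vshape (s k)) (τ k) z.1 z.2) μ :=
    fun k _ => integrable_breg_vshape hsupp (hsτ k).2
  have hmono : ∫ z, n * breg φ g z.1 z.2 ∂μ
      ≤ ∫ z, (∑ k ∈ Finset.range n, breg (vshape (s k)) (τ k) z.1 z.2 + 4) ∂μ :=
    integral_mono_ae (hint.const_mul _) ((integrable_finsetSum _ hτint).add (integrable_const _))
      (hsupp.mono fun z hz => happrox _ hz.1 _ hz.2)
  rw [integral_const_mul, integral_add (integrable_finsetSum _ hτint) (integrable_const _),
    integral_finsetSum _ hτint, integral_const, probReal_univ, one_smul] at hmono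
  have hsum : ∑ k ∈ Finset.range n, ∫ z, breg (vshape (s k)) (τ k) z.1 z.2 ∂μ
      ≤ n * vshapeSup μ := by
    simpa using Finset.sum_le_sum fun k (_ : k ∈ Finset.range n) =>
      integral_breg_vshape_le_vshapeSup hsupp (hsτ k).1 (hsτ k).2
  have hn' : (0 : ℝ) < n := by exact_mod_cast hn
  have hbound : ∫ z, breg φ g z.1 z.2 ∂μ ≤ (n * vshapeSup μ + 4) / n := by
    rw [le_div_iff₀ hn']
    linarith
  rwa [add_div, mul_div_cancel_left₀ _ hn'.ne'] at hbound

end Expectation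

theorem bregman_le_sup_vshaped_general
    (φ g : ℝ → ℝ)
    (hsub : IsSubgradientOn φ g)
    (hbdd : ∀ v ∈ Set.Icc (0 : ℝ) 1, g v ∈ Set.Icc (-1 : ℝ) 1)
    (μ : Measure (ℝ × ℝ)) [IsProbabilityMeasure μ]
    (hsupp : μ ((Set.Icc (0 : ℝ) 1 ×ˢ Set.Icc (0 : ℝ) 1)ᶜ) = 0) :
    (∫ z, breg φ g z.1 z.2 ∂μ) ≤
      sSup {e : ℝ | ∃ vs ∈ Set.Icc (0 : ℝ) 1,
        e = ∫ z, breg (vshape vs) (vshapeGrad vs) z.1 z.2 ∂μ} := by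
  have hsq : ∀ᵐ z ∂μ, z ∈ Icc (0 : ℝ) 1 ×ˢ Icc (0 : ℝ) 1 := mem_ae_iff.mpr hsupp
  change _ ≤ vshapeSup μ
  by_cases hint : Integrable (fun z : ℝ × ℝ => breg φ g z.1 z.2) μ
  · refine le_of_forall_pos_le_add fun ε hε => ?_
    obtain ⟨n, hn⟩ := exists_nat_gt (4 / ε)
    have hn₀ : (0 : ℝ) < n := (div_pos four_pos hε).trans hn
    calc _ ≤ vshapeSup μ + 4 / n :=
          integral_breg_le_vshapeSup_add hsub hbdd hsq hint (by exact_mod_cast hn₀)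
      _ ≤ vshapeSup μ + ε := by
          gcongr
          rw [div_le_iff₀ hn₀]
          rw [div_lt_iff₀ hε] at hn
          linarith
  · rw [integral_undef hint]
    exact vshapeSup_nonneg hsq

/-- for any convex `φ : [0,1] → ℝ` with a subgradient bounded in
`[-1,1]`, and any probability distribution `Π` on `[0,1] × [0,1]`,
`E_Π D_φ(v1 ‖ v2) ≤ sup_{v* ∈ [0,1]} E_Π D_{φ_{v*}}(v1 ‖ v2)`. -/
theorem bregman_le_sup_vshaped
    (φ g : ℝ → ℝ) (hconv : ConvexOn ℝ (Set.Icc (0 : ℝ) 1) φ)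
    (hsub : IsSubgradientOn φ g)
    (hbdd : ∀ v ∈ Set.Icc (0 : ℝ) 1, g v ∈ Set.Icc (-1 : ℝ) 1)
    (μ : Measure (ℝ × ℝ)) [IsProbabilityMeasure μ]
    (hsupp : μ ((Set.Icc (0 : ℝ) 1 ×ˢ Set.Icc (0 : ℝ) 1)ᶜ) = 0) :
    (∫ z, breg φ g z.1 z.2 ∂μ) ≤
      sSup {e : ℝ | ∃ vs ∈ Set.Icc (0 : ℝ) 1,
        e = ∫ z, breg (vshape vs) (vshapeGrad vs) z.1 z.2 ∂μ} :=
  bregman_le_sup_vshaped_general φ g hsub hbdd μ hsupp
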